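/- arXiv:1710.09358 — 5 statements merged into one kernel-verified Lean document; each statement's English description precedes it below -/
import Mathlib

section
/- Let n be a positive integer and d ≥ 0 an integer. Then the number of entries of [n]^d is the binomial coefficient C(d+n-1, d), and the sum of the entries of [n]^d is C(d+n, d+1). -/
/-- The expansion `[σ]` of a finite sequence `σ = (s_1,…,s_k)` of positive
integers: the concatenation `[s_1] ⌢ [s_2] ⌢ … ⌢ [s_k]`, where `[a] = (1,2,…,a)`. -/
def expand (σ : List ℕ) : List ℕ := (σ.map fun a => List.range' 1 a).flatten

lemma hockey (d a : ℕ) :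
    ((List.range a).map (fun i => (d + i).choose d)).sum = (d + a).choose (d + 1) := by
  induction a with
  | zero => simp
  | succ a ih =>
    rw [List.range_succ, List.map_append, List.sum_append, ih]
    have h : (d + (a + 1)).choose (d + 1) = (d + a).choose d + (d + a).choose (d + 1) := by
      rw [show d + (a + 1) = (d + a) + 1 from rfl, Nat.choose_succ_succ']
    simp only [List.map_cons, List.map_nil, List.sum_cons, List.sum_nil, Nat.add_zero, h]
    omega

lemma key1 (d a : ℕ) :
    ((List.range' 1 a).map fun b => (d + b - 1).choose d).sum = (d + a).choose (d + 1) := by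
  rw [List.range'_eq_map_range, List.map_map, ← hockey d a]
  congr 1
  apply List.map_congr_left
  intro i _
  show (d + (1 + i) - 1).choose d = (d + i).choose d
  congr 1
  omega

lemma key2 (d a : ℕ) :
    ((List.range' 1 a).map fun b => (d + b).choose (d + 1)).sum = (d + 1 + a).choose (d + 2) := by
  rw [List.range'_eq_map_range, List.map_map, ← hockey (d + 1) a]
  congr 1
  apply List.map_congr_left
  intro i _
  show (d + (1 + i)).choose (d + 1) = (d + 1 + i).choose (d + 1)
  congr 1
  omega

lemma sum_expand_map (f : ℕ → ℕ) (σ : List ℕ) :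
    ((expand σ).map f).sum = (σ.map fun a => ((List.range' 1 a).map f).sum).sum := by
  induction σ with
  | nil => simp [expand]
  | cons a l ih =>
    have : expand (a :: l) = List.range' 1 a ++ expand l := by simp [expand]
    rw [this, List.map_append, List.sum_append, ih, List.map_cons, List.sum_cons]

lemma main_lemma (d : ℕ) (σ : List ℕ) :
    (expand^[d] σ).length = (σ.map (fun a => (d + a - 1).choose d)).sum ∧
    (expand^[d] σ).sum = (σ.map (fun a => (d + a).choose (d + 1))).sum := by
  induction d generalizing σ with
  | zero =>
    simp only [Function.iterate_zero, id]
    constructor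
    · induction σ with
      | nil => rfl
      | cons a l ih =>
        rw [List.length_cons, List.map_cons, List.sum_cons, ih]
        have : (0 + a - 1).choose 0 = 1 := Nat.choose_zero_right _
        omega
    · induction σ with
      | nil => rfl
      | cons a l ih =>
        rw [List.sum_cons, List.map_cons, List.sum_cons, ih]
        have : (0 + a).choose (0 + 1) = a := by rw [Nat.zero_add, Nat.choose_one_right]
        omega
  | succ d ih =>
    rw [Function.iterate_succ_apply]
    obtain ⟨h1, h2⟩ := ih (expand σ)
    constructor
    · rw [h1, sum_expand_map]
      congr 1
      apply List.map_congr_left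
      intro a _
      rw [key1]
      congr 1
      omega
    · rw [h2, sum_expand_map]
      congr 1
      apply List.map_congr_left
      intro a _
      exact key2 d a

/-- For a positive integer `n` and `d ≥ 0`, the number of entries of `[n]^d` is
`C(d+n-1, d)` and the sum of the entries of `[n]^d` is `C(d+n, d+1)`.
Here `[n]^d = expand^[d] [n]`, with `[n]^0 = (n)` the singleton sequence. -/
theorem length_and_sum_of_iterated_expansion (n d : ℕ) (hn : 0 < n) :
    (expand^[d] [n]).length = (d + n - 1).choose d ∧
    (expand^[d] [n]).sum = (d + n).choose (d + 1) := by
  obtain ⟨h1, h2⟩ := main_lemma d [n]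
  simp only [List.map_cons, List.map_nil, List.sum_cons, List.sum_nil, Nat.add_zero] at h1 h2
  exact ⟨h1, h2⟩
end

section
/- Let d be a positive integer. Every positive integer a can be written uniquely in the form a = C(k_d, d) + C(k_{d-1}, d-1) + ... + C(k_2, 2) + C(k_1, 1), where k_d > k_{d-1} > ... > k_2 ≥ k_1 ≥ 1 (with the convention C(p,q) = 0 when p < q). That is, such integers k_d, ..., k_1 exist and are uniquely determined by a and d. -/
/-- The conditions `k_d > k_{d-1} > … > k_2 ≥ k_1 ≥ 1` on a tuple
`(k_1,…,k_d)` (encoded as `k : Fin d → ℕ` with `k ⟨i-1,_⟩ = k_i`). -/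
def FracCond (d : ℕ) (k : Fin d → ℕ) : Prop :=
  (∀ h : 0 < d, 1 ≤ k ⟨0, h⟩) ∧
  ∀ (i : ℕ) (h : i + 1 < d),
    if i = 0 then k ⟨i, Nat.lt_of_succ_lt h⟩ ≤ k ⟨i + 1, h⟩
    else k ⟨i, Nat.lt_of_succ_lt h⟩ < k ⟨i + 1, h⟩

/-- `k : Fin d → ℕ` encodes the `d`-fractal decomposition of `a`:
`a = C(k_d,d) + C(k_{d-1},d-1) + … + C(k_2,2) + C(k_1,1)` with
`k_d > k_{d-1} > … > k_2 ≥ k_1 ≥ 1` (where `C(p,q) = 0` if `p < q`). -/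
def IsFracDecomp (d a : ℕ) (k : Fin d → ℕ) : Prop :=
  FracCond d k ∧ a = ∑ i : Fin d, (k i).choose ((i : ℕ) + 1)

/-- The `d`-fractal coefficients `[a]^{(d)} = (k_d-d+2, k_{d-1}-d+3, …, k_3-1, k_2, k_1)`
of a decomposition `k`: the coefficient `c_i` (for the term `C(k_i, i)`) is
`c_1 = k_1` and `c_i = k_i - i + 2` for `i ≥ 2`; in the `Fin d` encoding
(index `i` stands for `k_{i+1}`) this is `c ⟨i⟩ = k ⟨i⟩ + 1 - i` for `i ≥ 1`. -/
def fracCoeff (d : ℕ) (k : Fin d → ℕ) (i : Fin d) : ℕ :=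
  if (i : ℕ) = 0 then k i else k i + 1 - (i : ℕ)

/-!
Writing `k_1 = g_1 + 1` and `k_i = g_i` for `i ≥ 2` turns a decomposition of `a` into one of
`a - 1 = C(g_d, d) + ⋯ + C(g_1, 1)` with `g_d > ⋯ > g_1 ≥ 0`: the combinatorial number system.
There, the lower terms always sum to less than `C(g_d, d - 1)`, so
`C(g_d, d) ≤ a - 1 < C(g_d + 1, d)`. This pins down `g_d` (uniqueness), and choosing `g_d` this
way leaves a remainder `< C(g_d, d - 1)` to decompose recursively (existence).
-/

open Finset

theorem Nat.exists_le_lt_succ_of_le_of_lt {f : ℕ → ℕ} {b N : ℕ} (h0 : f 0 ≤ b) (hN : b < f N) :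
    ∃ m < N, f m ≤ b ∧ b < f (m + 1) := by
  induction N with
  | zero => omega
  | succ N ih =>
    by_cases h : b < f N
    · obtain ⟨m, hm, hfm⟩ := ih h
      exact ⟨m, by omega, hfm⟩
    · exact ⟨N, by omega, not_lt.1 h, hN⟩

theorem Nat.eq_of_choose_le_of_lt_choose_succ {m m' k b : ℕ} (h : m.choose k ≤ b)
    (hs : b < (m + 1).choose k) (h' : m'.choose k ≤ b) (hs' : b < (m' + 1).choose k) :
    m = m' := by
  by_contra hne
  rcases lt_or_gt_of_ne hne with hlt | hlt
  · have := Nat.choose_le_choose k (show m + 1 ≤ m' from hlt); omega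
  · have := Nat.choose_le_choose k (show m' + 1 ≤ m from hlt); omega

theorem Nat.lt_choose_add {b d : ℕ} (hd : 0 < d) : b < (b + d).choose d := by
  calc b < (b + 1).choose b := by rw [Nat.choose_succ_self_right]; omega
    _ ≤ (b + d).choose b := Nat.choose_le_choose b (by omega)
    _ = (b + d).choose d := Nat.choose_symm_add

theorem Fin.strictMono_snoc {α : Type*} [Preorder α] {n : ℕ} {f : Fin n → α} {x : α} :
    StrictMono (Fin.snoc f x : Fin (n + 1) → α) ↔ StrictMono f ∧ ∀ i, f i < x := by
  rw [← Fin.insertNth_last', Fin.strictMono_insertNth_iff]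
  simp [Fin.castSucc_lt_last, Fin.not_le.2 (Fin.castSucc_lt_last _)]

theorem sum_choose_lt_choose {d N : ℕ} {g : Fin d → ℕ} (hg : StrictMono g) (hN : ∀ i, g i < N) :
    ∑ i, (g i).choose (i + 1) < N.choose d := by
  induction d generalizing N with
  | zero => simp
  | succ d ih =>
    set m := g (Fin.last d)
    have hinit : ∑ i : Fin d, (g i.castSucc).choose (i + 1) < m.choose d :=
      ih (hg.comp Fin.strictMono_castSucc) fun i => hg (Fin.castSucc_lt_last i)
    calc ∑ i, (g i).choose (i + 1)
        = ∑ i : Fin d, (g i.castSucc).choose (i + 1) + m.choose (d + 1) := by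
          simp [Fin.sum_univ_castSucc, m]
      _ < m.choose d + m.choose (d + 1) := by omega
      _ = (m + 1).choose (d + 1) := (Nat.choose_succ_succ' _ _).symm
      _ ≤ N.choose (d + 1) := Nat.choose_le_choose _ (hN _)

theorem choose_last_le_sum_choose_lt_choose_succ {d : ℕ} {g : Fin (d + 1) → ℕ}
    (hg : StrictMono g) :
    (g (Fin.last d)).choose (d + 1) ≤ ∑ i, (g i).choose (i + 1) ∧
      ∑ i, (g i).choose (i + 1) < (g (Fin.last d) + 1).choose (d + 1) := by
  refine ⟨?_, sum_choose_lt_choose hg fun i => Nat.lt_succ_of_le (hg.monotone (Fin.le_last i))⟩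
  simpa using single_le_sum (f := fun i : Fin (d + 1) => (g i).choose (i + 1))
    (fun _ _ => Nat.zero_le _) (mem_univ (Fin.last d))

theorem eq_of_sum_choose_eq {d : ℕ} {g g' : Fin d → ℕ} (hg : StrictMono g) (hg' : StrictMono g')
    (h : ∑ i, (g i).choose (i + 1) = ∑ i, (g' i).choose (i + 1)) : g = g' := by
  induction d with
  | zero => exact Subsingleton.elim _ _
  | succ d ih =>
    have hlast : g (Fin.last d) = g' (Fin.last d) := by
      obtain ⟨h₁, h₂⟩ := choose_last_le_sum_choose_lt_choose_succ hg
      obtain ⟨h₁', h₂'⟩ := choose_last_le_sum_choose_lt_choose_succ hg'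
      rw [h] at h₁ h₂
      exact Nat.eq_of_choose_le_of_lt_choose_succ h₁ h₂ h₁' h₂'
    have hinit : Fin.init g = Fin.init g' := by
      refine ih (hg.comp Fin.strictMono_castSucc) (hg'.comp Fin.strictMono_castSucc) ?_
      simp only [Fin.sum_univ_castSucc, Fin.val_last, hlast] at h
      simpa [Fin.init] using h
    rw [← Fin.snoc_init_self g, ← Fin.snoc_init_self g', hinit, hlast]

theorem exists_strictMono_sum_choose_eq {d N b : ℕ} (hb : b < N.choose d) :
    ∃ g : Fin d → ℕ, StrictMono g ∧ (∀ i, g i < N) ∧ b = ∑ i, (g i).choose (i + 1) := by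
  induction d generalizing b N with
  | zero =>
    refine ⟨Fin.elim0, fun i => i.elim0, fun i => i.elim0, ?_⟩
    simpa using hb
  | succ d ih =>
    obtain ⟨m, hmN, hm, hbm⟩ := Nat.exists_le_lt_succ_of_le_of_lt
      (f := fun n => n.choose (d + 1)) (by simp) hb
    have hr : b - m.choose (d + 1) < m.choose d := by
      rw [Nat.choose_succ_succ'] at hbm; omega
    obtain ⟨g, hg, hgm, hgr⟩ := ih hr
    refine ⟨Fin.snoc g m, Fin.strictMono_snoc.2 ⟨hg, hgm⟩, fun i => ?_, ?_⟩
    · induction i using Fin.lastCases <;> simp [hmN, (hgm _).trans hmN]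
    · simp only [Fin.sum_univ_castSucc, Fin.snoc_castSucc, Fin.snoc_last, Fin.val_last,
        Fin.val_castSucc, ← hgr]
      omega

theorem fracCond_succ_iff {e : ℕ} {k : Fin (e + 1) → ℕ} :
    FracCond (e + 1) k ↔ 1 ≤ k 0 ∧ ∀ i : Fin e,
      if (i : ℕ) = 0 then k i.castSucc ≤ k i.succ else k i.castSucc < k i.succ :=
  ⟨fun ⟨h0, h⟩ => ⟨h0 (Nat.succ_pos e), fun i => h i (by omega)⟩,
    fun ⟨h0, h⟩ => ⟨fun _ => h0, fun i hi => h ⟨i, by omega⟩⟩⟩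

theorem fracCond_add_single_iff {e : ℕ} {g : Fin (e + 1) → ℕ} :
    FracCond (e + 1) (g + Pi.single 0 1) ↔ StrictMono g := by
  rw [fracCond_succ_iff, Fin.strictMono_iff_lt_succ]
  simp only [Pi.add_apply, Pi.single_apply, Fin.ext_iff, Fin.val_castSucc, Fin.val_succ,
    Fin.val_zero, if_true, le_add_iff_nonneg_left, zero_le, true_and]
  refine forall_congr' fun i => ?_
  split_ifs <;> simp_all

theorem sum_choose_add_single {e : ℕ} (g : Fin (e + 1) → ℕ) :
    ∑ i, ((g + Pi.single 0 1 : Fin (e + 1) → ℕ) i).choose (i + 1) =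
      ∑ i, (g i).choose (i + 1) + 1 := by
  simp only [Fin.sum_univ_succ, Pi.add_apply, Pi.single_eq_same, Fin.val_zero,
    Pi.single_eq_of_ne (Fin.succ_ne_zero _), add_zero, zero_add, Nat.choose_one_right]
  omega

theorem FracCond.exists_eq_add_single {e : ℕ} {k : Fin (e + 1) → ℕ} (h : FracCond (e + 1) k) :
    ∃ g : Fin (e + 1) → ℕ, k = g + Pi.single 0 1 := by
  refine ⟨k - Pi.single 0 1, funext fun i => ?_⟩
  have : 1 ≤ k 0 := h.1 (Nat.succ_pos e)
  by_cases hi : i = 0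
  · subst hi
    exact (Nat.sub_add_cancel this).symm
  · simp [hi]

theorem isFracDecomp_add_single_iff {e b : ℕ} {g : Fin (e + 1) → ℕ} :
    IsFracDecomp (e + 1) (b + 1) (g + Pi.single 0 1) ↔
      StrictMono g ∧ b = ∑ i, (g i).choose (i + 1) := by
  rw [IsFracDecomp, fracCond_add_single_iff, sum_choose_add_single, Nat.add_right_cancel_iff]

/-- Every positive integer `a` can be written **uniquely** in the form
`a = C(k_d,d) + C(k_{d-1},d-1) + … + C(k_2,2) + C(k_1,1)` with
`k_d > k_{d-1} > … > k_2 ≥ k_1 ≥ 1` (where `C(p,q) = 0` when `p < q`). -/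
theorem fractal_decomposition_exists_unique (d a : ℕ) (hd : 0 < d) (ha : 0 < a) :
    ∃! k : Fin d → ℕ, IsFracDecomp d a k := by
  obtain ⟨e, rfl⟩ : ∃ e, d = e + 1 := ⟨d - 1, by omega⟩
  obtain ⟨b, rfl⟩ : ∃ b, a = b + 1 := ⟨a - 1, by omega⟩
  obtain ⟨g, hg, -, hb⟩ := exists_strictMono_sum_choose_eq (Nat.lt_choose_add (b := b) e.succ_pos)
  refine ⟨g + Pi.single 0 1, isFracDecomp_add_single_iff.2 ⟨hg, hb⟩, fun k hk => ?_⟩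
  obtain ⟨g', rfl⟩ := hk.1.exists_eq_add_single
  obtain ⟨hg', hb'⟩ := isFracDecomp_add_single_iff.1 hk
  rw [eq_of_sum_choose_eq hg' hg (hb'.symm.trans hb)]
end

section
/- Let a, d, n be positive integers with a ≤ C(n+d-1, d) (so that [n]^d has at least a entries). Then the a-th entry of [n]^d equals the last d-fractal coefficient k_1 of a, where a = C(k_d,d) + C(k_{d-1},d-1) + ... + C(k_2,2) + C(k_1,1) is the d-fractal decomposition of a. Equivalently, the a-th entry of the infinite sequence [ℕ]^{d-1} = [1]^{d-1} ⌢ [2]^{d-1} ⌢ [3]^{d-1} ⌢ ... equals k_1. -/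
/-!
Since `[n]^{d+1} = [1]^d ⌢ [2]^d ⌢ ⋯ ⌢ [n]^d` and `[j]^d` has `C(j+d-1, d)` entries, the
hockey-stick identity shows that the blocks in front of `[j]^d` have `C(j+d-1, d+1)` entries in
total. Write `a = a' + C(k_{d+1}, d+1)` and put `j = k_{d+1} - d + 1`. The conditions on the
decomposition give `1 ≤ a' ≤ C(k_{d+1}, d)`, and `a ≤ C(n+d, d+1)` forces `j ≤ n`. So the
`a`-th entry of `[n]^{d+1}` is the `a'`-th entry of the block `[j]^d`, where `(k_1, …, k_d)` is
the `d`-fractal decomposition of `a'`, and induction on `d` finishes the proof.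
-/

theorem expand_append (A B : List ℕ) : expand (A ++ B) = expand A ++ expand B := by
  simp [expand]

theorem iterate_expand_append (d : ℕ) (A B : List ℕ) :
    expand^[d] (A ++ B) = expand^[d] A ++ expand^[d] B := by
  induction d generalizing A B with
  | zero => rfl
  | succ d ih => simp only [Function.iterate_succ_apply, expand_append, ih]

theorem iterate_expand_nil (d : ℕ) : expand^[d] [] = [] :=
  Function.iterate_fixed rfl d

theorem iterate_succ_expand_singleton (d m : ℕ) :
    expand^[d + 1] [m] = expand^[d] (List.range' 1 m) := by
  simp [expand]

theorem length_iterate_expand_range' (d n : ℕ) :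
    (expand^[d] (List.range' 1 n)).length = (n + d).choose (d + 1) := by
  induction d generalizing n with
  | zero => simp
  | succ d ih =>
    induction n with
    | zero => simp [iterate_expand_nil]
    | succ n ihn =>
      rw [List.range'_1_concat, iterate_expand_append, List.length_append, ihn,
        iterate_succ_expand_singleton, ih, show n + 1 + (d + 1) = n + d + 1 + 1 by omega,
        Nat.choose_succ_succ' (n + d + 1), show n + (d + 1) = n + d + 1 by omega,
        show 1 + n + d = n + d + 1 by omega, add_comm]

theorem iterate_succ_expand_singleton_eq_append (d : ℕ) {m n : ℕ} (hmn : m < n) :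
    expand^[d + 1] [n] = expand^[d] (List.range' 1 m) ++ expand^[d] [m + 1] ++
      expand^[d] (List.range' (m + 2) (n - m - 1)) := by
  have hsplit :
      List.range' 1 n = List.range' 1 m ++ [m + 1] ++ List.range' (m + 2) (n - m - 1) := by
    rw [show m + 1 = 1 + m by omega, ← List.range'_1_concat, show m + 2 = 1 + (m + 1) by omega,
      List.range'_append_1]
    congr 1
    omega
  rw [iterate_succ_expand_singleton, hsplit, iterate_expand_append, iterate_expand_append]

def fracSum {d : ℕ} (k : Fin d → ℕ) : ℕ := ∑ i, (k i).choose ((i : ℕ) + 1)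

theorem fracSum_succ {d : ℕ} (k : Fin (d + 1) → ℕ) :
    fracSum k = fracSum (Fin.init k) + (k (Fin.last d)).choose (d + 1) := by
  simp [fracSum, Fin.sum_univ_castSucc, Fin.init]

namespace FracCond

variable {d : ℕ}

theorem pos_fracSum {k : Fin (d + 1) → ℕ} (hk : FracCond (d + 1) k) : 0 < fracSum k :=
  calc 0 < k 0 := hk.1 d.succ_pos
    _ = (k 0).choose (((0 : Fin (d + 1)) : ℕ) + 1) := by simp
    _ ≤ fracSum k :=
      Finset.single_le_sum (f := fun i : Fin (d + 1) => (k i).choose ((i : ℕ) + 1))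
        (fun _ _ => Nat.zero_le _) (Finset.mem_univ 0)

theorem init {k : Fin (d + 2) → ℕ} (hk : FracCond (d + 2) k) : FracCond (d + 1) (Fin.init k) :=
  ⟨fun _ => hk.1 (by omega), fun i hi => hk.2 i (by omega)⟩

theorem fracSum_init_le {k : Fin (d + 2) → ℕ} (hk : FracCond (d + 2) k) :
    fracSum (Fin.init k) ≤ (k (Fin.last (d + 1))).choose (d + 1) := by
  induction d with
  | zero => simpa [fracSum, Fin.init] using hk.2 0 (by omega)
  | succ d ih =>
    set T := Fin.init k (Fin.last (d + 1))
    have hT : T < k (Fin.last (d + 2)) := by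
      have h := hk.2 (d + 1) (by omega)
      rwa [if_neg (by omega)] at h
    calc fracSum (Fin.init k) = fracSum (Fin.init (Fin.init k)) + T.choose (d + 2) :=
          fracSum_succ _
      _ ≤ T.choose (d + 1) + T.choose (d + 2) := Nat.add_le_add_right (ih hk.init) _
      _ = (T + 1).choose (d + 2) := (Nat.choose_succ_succ' T (d + 1)).symm
      _ ≤ (k (Fin.last (d + 2))).choose (d + 2) := Nat.choose_le_choose _ hT

end FracCond

theorem getElem?_iterate_expand_of_fracCond {d n : ℕ} {k : Fin (d + 1) → ℕ}
    (hk : FracCond (d + 1) k) (hle : fracSum k ≤ (n + d).choose (d + 1)) :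
    (expand^[d + 1] [n])[fracSum k - 1]? = some (k 0) := by
  induction d generalizing n with
  | zero =>
    have hsum : fracSum k = k 0 := by simp [fracSum]
    have hk0 : 1 ≤ k 0 := hk.1 Nat.one_pos
    have hkn : k 0 ≤ n := by simpa [hsum] using hle
    rw [iterate_succ_expand_singleton, Function.iterate_zero_apply, hsum,
      List.getElem?_range' (by omega)]
    congr 1
    omega
  | succ d ih =>
    set K := k (Fin.last (d + 1))
    have hsum : fracSum k = fracSum (Fin.init k) + K.choose (d + 2) := fracSum_succ k
    have hpos : 0 < fracSum (Fin.init k) := hk.init.pos_fracSum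
    have hbound : fracSum (Fin.init k) ≤ K.choose (d + 1) := hk.fracSum_init_le
    replace hle : fracSum k ≤ (n + d + 1).choose (d + 2) := hle
    obtain ⟨m, hm⟩ : ∃ m, K = m + (d + 1) := Nat.exists_eq_add_of_le' <| by
      by_contra! hsmall
      rw [Nat.choose_eq_zero_of_lt hsmall] at hbound
      omega
    have hmn : m < n := by
      by_contra! hnm
      have := Nat.choose_le_choose (d + 2) (show n + d + 1 ≤ K by omega)
      omega
    have hK : m + 1 + d = K := by omega
    have hprefix : (expand^[d + 1] (List.range' 1 m)).length = K.choose (d + 2) := by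
      rw [length_iterate_expand_range', hm]
    have hblock : (expand^[d + 1] [m + 1]).length = K.choose (d + 1) := by
      rw [iterate_succ_expand_singleton, length_iterate_expand_range', hK]
    rw [iterate_succ_expand_singleton_eq_append (d + 1) hmn, List.append_assoc,
      List.getElem?_append_right (by omega), hprefix,
      show fracSum k - 1 - K.choose (d + 2) = fracSum (Fin.init k) - 1 by omega,
      List.getElem?_append_left (by omega), ih hk.init (hK ▸ hbound)]
    rfl

theorem entry_of_iterated_expansion_general (n d a : ℕ) (hd : 0 < d)
    (hle : a ≤ (n + d - 1).choose d) (k : Fin d → ℕ) (hk : IsFracDecomp d a k) :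
    (expand^[d] [n])[a - 1]? = some (k ⟨0, hd⟩) := by
  obtain ⟨d, rfl⟩ : ∃ d', d = d' + 1 := ⟨d - 1, by omega⟩
  obtain ⟨hcond, rfl⟩ := hk
  exact getElem?_iterate_expand_of_fracCond hcond (by rwa [Nat.add_succ_sub_one] at hle)

/-- Let `a, d, n` be positive integers with `a ≤ C(n+d-1, d)`.  Then the `a`-th entry
of `[n]^d` (entries indexed from `1`, so at `0`-based position `a-1`) equals the last
`d`-fractal coefficient `k_1` of `a`, where
`a = C(k_d,d) + … + C(k_2,2) + C(k_1,1)` is the `d`-fractal decomposition of `a`.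
Here `[n]^d = expand^[d] [n]`, with `[n]^0 = (n)` the singleton sequence. -/
theorem entry_of_iterated_expansion (n d a : ℕ) (hn : 0 < n) (hd : 0 < d) (ha : 0 < a)
    (hle : a ≤ (n + d - 1).choose d) (k : Fin d → ℕ) (hk : IsFracDecomp d a k) :
    (expand^[d] [n])[a - 1]? = some (k ⟨0, hd⟩) :=
  entry_of_iterated_expansion_general n d a hd hle k hk
end

section
/- Let a and d be positive integers and let [a]^{(d)} = (c_d, c_{d-1}, ..., c_2, c_1) be the d-fractal coefficients of a. Then the (d+1)-fractal coefficients of a^{⟨d⟩} are obtained by repeating the last entry: [a^{⟨d⟩}]^{(d+1)} = (c_d, c_{d-1}, ..., c_2, c_1, c_1). -/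
/-- The Macaulay operator `h ↦ h^{⟨i⟩}`: if
`h = C(m_i,i) + C(m_{i-1},i-1) + … + C(m_j,j)` (with `m_i > … > m_j ≥ j ≥ 1`) is the
`i`-binomial expansion of `h > 0`, then
`h^{⟨i⟩} = C(m_i+1,i+1) + C(m_{i-1}+1,i) + … + C(m_j+1,j+1)`; and `0^{⟨i⟩} = 0`.
It is computed greedily: `m_i` is the largest `m` with `C(m,i) ≤ h`. -/
def macaulay : ℕ → ℕ → ℕ
  | _, 0 => 0
  | 0, _ + 1 => 0
  | i + 1, h + 1 =>
    let m := Nat.findGreatest (fun m => m.choose (i + 1) ≤ h + 1) (h + i + 2)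
    (m + 1).choose (i + 2) + macaulay i (h + 1 - m.choose (i + 1))

namespace FracProof

def S : (d : ℕ) → (Fin d → ℕ) → ℕ
  | 0, _ => 0
  | d + 1, k => S d (fun i => k i.castSucc) + (k (Fin.last d)).choose (d + 1)

def dropK (d : ℕ) (k : Fin (d + 1) → ℕ) : Fin d → ℕ := fun i => k i.castSucc

def ext {d : ℕ} (k : Fin d → ℕ) : ℕ → ℕ := fun i => if h : i < d then k ⟨i, h⟩ else 0

lemma ext_eq {d : ℕ} (k : Fin d → ℕ) (i : ℕ) (h : i < d) : ext k i = k ⟨i, h⟩ := dif_pos h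

lemma kcongr {d : ℕ} (k : Fin d → ℕ) {i j : ℕ} {hi : i < d} {hj : j < d} (h : i = j) :
    k ⟨i, hi⟩ = k ⟨j, hj⟩ := by subst h; rfl

lemma S_spec (d : ℕ) (k : Fin d → ℕ) :
    S d k = ∑ i : Fin d, (k i).choose ((i : ℕ) + 1) := by
  induction d with
  | zero => simp [S]
  | succ d ih =>
    rw [Fin.sum_univ_castSucc, show S (d+1) k = S d (dropK d k) + (k (Fin.last d)).choose (d+1) from rfl, ih]
    simp [dropK]

def liftK (d : ℕ) (k : Fin (d + 1) → ℕ) : Fin (d + 2) → ℕ := fun j =>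
  if (j : ℕ) = 0 then k ⟨0, Nat.succ_pos d⟩
  else k ⟨(j : ℕ) - 1, by have := j.isLt; omega⟩ + if (j : ℕ) = 1 then 0 else 1

lemma liftK_mk (d : ℕ) (k : Fin (d + 1) → ℕ) (j : ℕ) (hj : j < d + 2) :
    liftK d k ⟨j, hj⟩ =
      if j = 0 then k ⟨0, Nat.succ_pos d⟩
      else k ⟨j - 1, by omega⟩ + if j = 1 then 0 else 1 := rfl

lemma frac_le {d : ℕ} {k : Fin d → ℕ} (hc : FracCond d k) (i : ℕ) (h : i + 1 < d) :
    k ⟨i, Nat.lt_of_succ_lt h⟩ ≤ k ⟨i + 1, h⟩ := by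
  have := hc.2 i h
  split at this
  · exact this
  · exact this.le

lemma frac_lt {d : ℕ} {k : Fin d → ℕ} (hc : FracCond d k) (i : ℕ) (hi : i ≠ 0)
    (h : i + 1 < d) : k ⟨i, Nat.lt_of_succ_lt h⟩ < k ⟨i + 1, h⟩ := by
  have := hc.2 i h
  rw [if_neg hi] at this; exact this

lemma frac_ge {d : ℕ} {k : Fin d → ℕ} (hc : FracCond d k) :
    ∀ i, ∀ h : i < d, i ≤ k ⟨i, h⟩ := by
  intro i
  induction i with
  | zero => exact fun _ => Nat.zero_le _
  | succ n ih =>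
    intro h
    rcases Nat.eq_zero_or_pos n with h0 | h0
    · subst h0
      have h1 := hc.1 (Nat.lt_of_succ_lt h)
      have h2 := frac_le hc 0 h
      omega
    · have h1 := ih (Nat.lt_of_succ_lt h)
      have h2 := frac_lt hc n (by omega) h
      omega

lemma ext_one {d : ℕ} {k : Fin d → ℕ} (hc : FracCond d k) (h0 : 0 < d) : 1 ≤ ext k 0 := by
  rw [ext_eq k 0 h0]; exact hc.1 h0

lemma ext_ge {d : ℕ} {k : Fin d → ℕ} (hc : FracCond d k) (i : ℕ) (h : i < d) :
    i ≤ ext k i := by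
  rw [ext_eq k i h]; exact frac_ge hc i h

lemma ext_le {d : ℕ} {k : Fin d → ℕ} (hc : FracCond d k) (i : ℕ) (h : i + 1 < d) :
    ext k i ≤ ext k (i + 1) := by
  rw [ext_eq k i (Nat.lt_of_succ_lt h), ext_eq k (i + 1) h]; exact frac_le hc i h

lemma ext_lt {d : ℕ} {k : Fin d → ℕ} (hc : FracCond d k) (i : ℕ) (hi : i ≠ 0)
    (h : i + 1 < d) : ext k i < ext k (i + 1) := by
  rw [ext_eq k i (Nat.lt_of_succ_lt h), ext_eq k (i + 1) h]; exact frac_lt hc i hi h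

lemma fracCond_drop {d : ℕ} {k : Fin (d + 1) → ℕ} (hd : 0 < d) (hc : FracCond (d + 1) k) :
    FracCond d (dropK d k) := by
  constructor
  · intro h
    exact hc.1 (by omega)
  · intro i h
    have := hc.2 i (by omega)
    by_cases h0 : i = 0
    · subst h0
      rw [if_pos rfl] at this ⊢
      exact this
    · rw [if_neg h0] at this ⊢
      exact this

lemma fracCond_lift {d : ℕ} {k : Fin (d + 1) → ℕ} (hc : FracCond (d + 1) k) :
    FracCond (d + 2) (liftK d k) := by
  constructor
  · intro h
    exact hc.1 _
  · intro i h
    by_cases h0 : i = 0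
    · subst h0
      rw [if_pos rfl]
      exact le_refl _
    · rw [if_neg h0]
      by_cases h1 : i = 1
      · subst h1
        exact Nat.lt_succ_of_le (frac_le hc 0 (by omega))
      · have hi1 : i < d + 2 := by omega
        rw [show (⟨i, Nat.lt_of_succ_lt h⟩ : Fin (d+2)) = ⟨i, hi1⟩ from rfl,
          liftK_mk, liftK_mk, if_neg h0, if_neg (by omega : i + 1 ≠ 0),
          if_neg h1, if_neg (by omega : i + 1 ≠ 1)]
        rw [kcongr (hi := by omega) (hj := by omega) k (show i + 1 - 1 = (i - 1) + 1 by omega)]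
        exact Nat.succ_lt_succ (frac_lt hc (i - 1) (by omega) (by omega : (i - 1) + 1 < d + 1))

lemma S_one' (k : Fin 1 → ℕ) : S 1 k = ext k 0 := by
  rw [ext_eq k 0 Nat.one_pos]
  show 0 + (k (Fin.last 0)).choose 1 = _
  rw [Nat.zero_add, Nat.choose_one_right]
  exact kcongr k rfl

lemma S_succ' (d : ℕ) (k : Fin (d + 1) → ℕ) :
    S (d + 1) k = S d (dropK d k) + (ext k d).choose (d + 1) := by
  rw [ext_eq k d (Nat.lt_succ_self d)]; rfl

lemma dropK_ext (d : ℕ) (k : Fin (d + 1) → ℕ) (i : ℕ) (h : i < d) :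
    ext (dropK d k) i = ext k i := by
  rw [ext_eq _ i h, ext_eq k i (by omega)]; rfl

lemma liftK_ext0 (d : ℕ) (k : Fin (d + 1) → ℕ) : ext (liftK d k) 0 = ext k 0 := by
  rw [ext_eq _ 0 (by omega), ext_eq k 0 (by omega)]; rfl

lemma liftK_ext1 (d : ℕ) (k : Fin (d + 1) → ℕ) : ext (liftK d k) 1 = ext k 0 := by
  rw [ext_eq _ 1 (by omega), ext_eq k 0 (by omega)]; rfl

lemma liftK_ext_succ (d : ℕ) (k : Fin (d + 1) → ℕ) (j : ℕ) (hj0 : j ≠ 0)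
    (hj : j + 1 < d + 2) : ext (liftK d k) (j + 1) = ext k j + 1 := by
  rw [ext_eq _ (j + 1) hj, ext_eq k j (by omega), liftK_mk,
    if_neg (by omega : j + 1 ≠ 0), if_neg (by omega : j + 1 ≠ 1),
    kcongr (hi := by omega) (hj := by omega) k (show j + 1 - 1 = j by omega)]

lemma liftK_last' (d : ℕ) (k : Fin (d + 2) → ℕ) :
    ext (liftK (d + 1) k) (d + 2) = ext k (d + 1) + 1 :=
  liftK_ext_succ (d + 1) k (d + 1) (by omega) (by omega)

lemma liftK_drop (d : ℕ) (k : Fin (d + 2) → ℕ) :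
    liftK d (dropK (d + 1) k) = dropK (d + 2) (liftK (d + 1) k) := by
  funext j
  rcases j with ⟨j, hj⟩
  rw [liftK_mk]
  rw [show dropK (d + 2) (liftK (d + 1) k) ⟨j, hj⟩ = liftK (d + 1) k ⟨j, by omega⟩ from rfl,
    liftK_mk]
  by_cases h0 : j = 0
  · subst h0; rw [if_pos rfl, if_pos rfl]; rfl
  · rw [if_neg h0, if_neg h0]; rfl

lemma le_S' : ∀ d (k : Fin (d + 1) → ℕ), ext k 0 ≤ S (d + 1) k := by
  intro d
  induction d with
  | zero =>
    intro k
    have h : S (0 + 1) k = ext k 0 := S_one' k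
    omega
  | succ d ih =>
    intro k
    have h1 : S (d + 2) k = S (d + 1) (dropK (d + 1) k) + (ext k (d + 1)).choose (d + 2) :=
      S_succ' (d + 1) k
    have h2 : ext (dropK (d + 1) k) 0 ≤ S (d + 1) (dropK (d + 1) k) := ih (dropK (d + 1) k)
    have h3 : ext (dropK (d + 1) k) 0 = ext k 0 := dropK_ext _ _ _ (by omega)
    show ext k 0 ≤ S (d + 2) k
    omega

lemma S_pos' {d : ℕ} {k : Fin (d + 1) → ℕ} (hc : FracCond (d + 1) k) : 1 ≤ S (d + 1) k := by
  have h1 : 1 ≤ ext k 0 := ext_one hc (by omega)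
  have h2 := le_S' d k
  omega

lemma succ_le_choose (j n : ℕ) : n + 1 ≤ (n + (j + 1)).choose (j + 1) := by
  induction j with
  | zero => simp
  | succ j ih =>
    have h : (n + (j + 1 + 1)).choose (j + 1 + 1)
        = (n + (j + 1)).choose (j + 1) + (n + (j + 1)).choose (j + 1 + 1) := by
      rw [show n + (j + 1 + 1) = (n + (j + 1)) + 1 by omega, Nat.choose_succ_succ']
    omega

lemma choose_lt_succ {n j : ℕ} (h1 : 1 ≤ j) (hn : j - 1 ≤ n) :
    n.choose j < (n + 1).choose j := by
  obtain ⟨j, rfl⟩ : ∃ m, j = m + 1 := ⟨j - 1, by omega⟩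
  rw [Nat.choose_succ_succ']
  have : 0 < n.choose j := Nat.choose_pos (by omega)
  omega

lemma B : ∀ d, ∀ k : Fin (d + 1) → ℕ, FracCond (d + 1) k → ∀ K, ext k d ≤ K →
    S (d + 1) k ≤ (K + 1).choose (d + 1) := by
  intro d
  induction d with
  | zero =>
    intro k hc K hK
    have h1 : S (0 + 1) k = ext k 0 := S_one' k
    have h2 : (K + 1).choose (0 + 1) = K + 1 := Nat.choose_one_right (K + 1)
    omega
  | succ d ih =>
    intro k hc K hK
    have hsplit : S (d + 2) k = S (d + 1) (dropK (d + 1) k) + (ext k (d + 1)).choose (d + 2) :=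
      S_succ' (d + 1) k
    have h2 : (ext k (d + 1)).choose (d + 2) ≤ K.choose (d + 2) := Nat.choose_le_choose _ hK
    have hPas : (K + 1).choose (d + 2) = K.choose (d + 1) + K.choose (d + 2) :=
      Nat.choose_succ_succ' K (d + 1)
    have h1 : S (d + 1) (dropK (d + 1) k) ≤ K.choose (d + 1) := by
      cases d with
      | zero =>
        have e0 : S (0 + 1) (dropK (0 + 1) k) = ext (dropK (0 + 1) k) 0 := S_one' _
        have e1 : ext (dropK (0 + 1) k) 0 = ext k 0 := dropK_ext _ _ _ (by omega)
        have e2 : ext k 0 ≤ ext k (0 + 1) := ext_le hc 0 (by omega)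
        have e3 : K.choose (0 + 1) = K := Nat.choose_one_right K
        omega
      | succ e =>
        have e1 : ext k (e + 1) < ext k (e + 2) := ext_lt hc (e + 1) (by omega) (by omega)
        have e2 : ext k (e + 2) ≤ K := hK
        have e4 : e + 2 ≤ ext k (e + 2) := ext_ge hc (e + 2) (by omega)
        have e3 : ext (dropK (e + 2) k) (e + 1) = ext k (e + 1) := dropK_ext _ _ _ (by omega)
        have hB : S (e + 2) (dropK (e + 2) k) ≤ (K - 1 + 1).choose (e + 2) :=
          ih (dropK (e + 2) k) (fracCond_drop (by omega) hc) (K - 1) (by rw [e3]; omega)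
        have hK1 : K - 1 + 1 = K := by omega
        rw [hK1] at hB
        exact hB
    show S (d + 2) k ≤ (K + 1).choose (d + 2)
    omega

lemma B' (d : ℕ) (k : Fin (d + 2) → ℕ) (hc : FracCond (d + 2) k) :
    S (d + 1) (dropK (d + 1) k) ≤ (ext k (d + 1)).choose (d + 1) := by
  cases d with
  | zero =>
    have e0 : S (0 + 1) (dropK (0 + 1) k) = ext (dropK (0 + 1) k) 0 := S_one' _
    have e1 : ext (dropK (0 + 1) k) 0 = ext k 0 := dropK_ext _ _ _ (by omega)
    have e2 : ext k 0 ≤ ext k (0 + 1) := ext_le hc 0 (by omega)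
    have e3 : (ext k (0 + 1)).choose (0 + 1) = ext k (0 + 1) := Nat.choose_one_right _
    omega
  | succ e =>
    have e1 : ext k (e + 1) < ext k (e + 2) := ext_lt hc (e + 1) (by omega) (by omega)
    have e4 : e + 2 ≤ ext k (e + 2) := ext_ge hc (e + 2) (by omega)
    have e3 : ext (dropK (e + 2) k) (e + 1) = ext k (e + 1) := dropK_ext _ _ _ (by omega)
    have hB : S (e + 2) (dropK (e + 2) k) ≤ (ext k (e + 2) - 1 + 1).choose (e + 2) :=
      B (e + 1) (dropK (e + 2) k) (fracCond_drop (by omega) hc) (ext k (e + 2) - 1)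
        (by rw [e3]; omega)
    have hK1 : ext k (e + 2) - 1 + 1 = ext k (e + 2) := by omega
    rw [hK1] at hB
    exact hB

lemma macaulay_zero (i : ℕ) : macaulay i 0 = 0 := by cases i <;> rfl

lemma macaulay_succ (i h : ℕ) :
    macaulay (i + 1) (h + 1) =
      (Nat.findGreatest (fun m => m.choose (i + 1) ≤ h + 1) (h + i + 2) + 1).choose (i + 2) +
        macaulay i
          (h + 1 - (Nat.findGreatest (fun m => m.choose (i + 1) ≤ h + 1) (h + i + 2)).choose (i + 1)) := by
  rw [macaulay]

lemma macaulay_eval (i a m : ℕ) (ha : 0 < a) (h0 : 0 < m)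
    (hm1 : m.choose (i + 1) ≤ a) (hm2 : a < (m + 1).choose (i + 1)) :
    macaulay (i + 1) a = (m + 1).choose (i + 2) + macaulay i (a - m.choose (i + 1)) := by
  obtain ⟨h, rfl⟩ : ∃ h, a = h + 1 := ⟨a - 1, by omega⟩
  have hb : m ≤ h + i + 2 := by
    rcases le_or_gt m i with hc | hc
    · omega
    · have hs := succ_le_choose i (m - (i + 1))
      rw [show m - (i + 1) + (i + 1) = m by omega] at hs
      omega
  have hfg : Nat.findGreatest (fun m => m.choose (i + 1) ≤ h + 1) (h + i + 2) = m := by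
    rw [Nat.findGreatest_eq_iff]
    refine ⟨hb, fun _ => hm1, fun n hn _ hP => ?_⟩
    have hP' : n.choose (i + 1) ≤ h + 1 := hP
    have hmono : (m + 1).choose (i + 1) ≤ n.choose (i + 1) := Nat.choose_le_choose _ hn
    omega
  rw [macaulay_succ, hfg]

lemma E : ∀ d (k : Fin (d + 1) → ℕ), FracCond (d + 1) k → ∀ M,
    S (d + 1) k = M.choose (d + 1) → S (d + 2) (liftK d k) = (M + 1).choose (d + 2) := by
  intro d
  induction d with
  | zero =>
    intro k hc M hS
    have h2 : M.choose 1 = M := Nat.choose_one_right M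
    have hS' : S 1 k = M.choose 1 := hS
    have h1 : S 1 k = ext k 0 := S_one' k
    have hM : ext k 0 = M := by omega
    have e1 : ext (dropK 1 (liftK 0 k)) 0 = ext (liftK 0 k) 0 := dropK_ext _ _ _ (by omega)
    have e2 : ext (liftK 0 k) 0 = ext k 0 := liftK_ext0 _ _
    have e3 : ext (liftK 0 k) 1 = ext k 0 := liftK_ext1 _ _
    have e4 : S 2 (liftK 0 k) = S 1 (dropK 1 (liftK 0 k)) + (ext (liftK 0 k) 1).choose 2 :=
      S_succ' 1 (liftK 0 k)
    have e5 : S 1 (dropK 1 (liftK 0 k)) = ext (dropK 1 (liftK 0 k)) 0 := S_one' _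
    have e6 : (M + 1).choose 2 = M.choose 1 + M.choose 2 := Nat.choose_succ_succ' M 1
    have e7 : (ext k 0).choose 2 = M.choose 2 := by rw [hM]
    have e8 : (ext (liftK 0 k) 1).choose 2 = (ext k 0).choose 2 := by rw [e3]
    show S 2 (liftK 0 k) = (M + 1).choose 2
    omega
  | succ d ih =>
    intro k hc M hS
    have hT : d + 1 ≤ ext k (d + 1) := ext_ge hc (d + 1) (by omega)
    have hsplit : S (d + 2) k = S (d + 1) (dropK (d + 1) k) + (ext k (d + 1)).choose (d + 2) :=
      S_succ' (d + 1) k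
    have hr1 : 1 ≤ S (d + 1) (dropK (d + 1) k) := S_pos' (fracCond_drop (by omega) hc)
    have hrB : S (d + 1) (dropK (d + 1) k) ≤ (ext k (d + 1)).choose (d + 1) := B' d k hc
    have hS' : S (d + 1) (dropK (d + 1) k) + (ext k (d + 1)).choose (d + 2) = M.choose (d + 2) := by
      rw [← hsplit]; exact hS
    have hM : d + 2 ≤ M := by
      by_contra hM
      have h0 : M.choose (d + 2) = 0 := Nat.choose_eq_zero_of_lt (by omega)
      omega
    have hTM : ext k (d + 1) < M := by
      by_contra hTM
      have h0 : M.choose (d + 2) ≤ (ext k (d + 1)).choose (d + 2) :=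
        Nat.choose_le_choose _ (by omega)
      omega
    have hP : (ext k (d + 1) + 1).choose (d + 2)
        = (ext k (d + 1)).choose (d + 1) + (ext k (d + 1)).choose (d + 2) :=
      Nat.choose_succ_succ' _ _
    have hTM1 : ext k (d + 1) + 1 = M := by
      by_contra hne
      have hlt2 : (ext k (d + 1) + 1).choose (d + 2) < (ext k (d + 1) + 1 + 1).choose (d + 2) :=
        choose_lt_succ (by omega) (by omega)
      have h3 : (ext k (d + 1) + 1 + 1).choose (d + 2) ≤ M.choose (d + 2) :=
        Nat.choose_le_choose _ (by omega)
      have h4 : (ext k (d + 1)).choose (d + 2) ≤ (ext k (d + 1) + 1).choose (d + 2) :=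
        Nat.choose_le_choose _ (by omega)
      omega
    have h4 : (ext k (d + 1) + 1).choose (d + 2) = M.choose (d + 2) := by rw [hTM1]
    have hre : S (d + 1) (dropK (d + 1) k) = (ext k (d + 1)).choose (d + 1) := by omega
    have hE : S (d + 2) (liftK d (dropK (d + 1) k)) = (ext k (d + 1) + 1).choose (d + 2) :=
      ih (dropK (d + 1) k) (fracCond_drop (by omega) hc) (ext k (d + 1)) hre
    have hld : liftK d (dropK (d + 1) k) = dropK (d + 2) (liftK (d + 1) k) := liftK_drop d k
    rw [hld] at hE
    have hfin : S (d + 3) (liftK (d + 1) k)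
        = S (d + 2) (dropK (d + 2) (liftK (d + 1) k))
          + (ext (liftK (d + 1) k) (d + 2)).choose (d + 3) := S_succ' (d + 2) (liftK (d + 1) k)
    have hll : ext (liftK (d + 1) k) (d + 2) = ext k (d + 1) + 1 := liftK_last' d k
    have hgoal : (M + 1).choose (d + 3) = M.choose (d + 2) + M.choose (d + 3) :=
      Nat.choose_succ_succ' M (d + 2)
    have h5 : (ext k (d + 1) + 1).choose (d + 3) = M.choose (d + 3) := by rw [hTM1]
    show S (d + 3) (liftK (d + 1) k) = (M + 1).choose (d + 3)
    rw [hfin, hll, hE, h4, h5]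
    omega

lemma macaulay_S : ∀ d (k : Fin (d + 1) → ℕ), FracCond (d + 1) k →
    macaulay (d + 1) (S (d + 1) k) = S (d + 2) (liftK d k) := by
  intro d
  induction d with
  | zero =>
    intro k hc
    have h0 : 1 ≤ ext k 0 := ext_one hc Nat.one_pos
    have h1 : S 1 k = ext k 0 := S_one' k
    have hc1 : (ext k 0).choose 1 = ext k 0 := Nat.choose_one_right _
    have hc2 : (ext k 0 + 1).choose 1 = ext k 0 + 1 := Nat.choose_one_right _
    have hm1' : (ext k 0).choose (0 + 1) ≤ ext k 0 := le_of_eq (Nat.choose_one_right _)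
    have hm2' : ext k 0 < (ext k 0 + 1).choose (0 + 1) :=
      lt_of_lt_of_le (Nat.lt_succ_self _) (le_of_eq (Nat.choose_one_right _).symm)
    have heval : macaulay 1 (ext k 0)
        = (ext k 0 + 1).choose 2 + macaulay 0 (ext k 0 - (ext k 0).choose 1) :=
      macaulay_eval 0 (ext k 0) (ext k 0) (by omega) (by omega) hm1' hm2'
    have h2 : ext k 0 - (ext k 0).choose 1 = 0 := by omega
    rw [h2] at heval
    have e1 : ext (dropK 1 (liftK 0 k)) 0 = ext (liftK 0 k) 0 := dropK_ext _ _ _ (by omega)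
    have e2 : ext (liftK 0 k) 0 = ext k 0 := liftK_ext0 _ _
    have e3 : ext (liftK 0 k) 1 = ext k 0 := liftK_ext1 _ _
    have e4 : S 2 (liftK 0 k) = S 1 (dropK 1 (liftK 0 k)) + (ext (liftK 0 k) 1).choose 2 :=
      S_succ' 1 (liftK 0 k)
    have e5 : S 1 (dropK 1 (liftK 0 k)) = ext (dropK 1 (liftK 0 k)) 0 := S_one' _
    have e6 : (ext k 0 + 1).choose 2 = (ext k 0).choose 1 + (ext k 0).choose 2 :=
      Nat.choose_succ_succ' _ 1
    have e7 : macaulay 0 0 = 0 := macaulay_zero 0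
    have e8 : (ext (liftK 0 k) 1).choose 2 = (ext k 0).choose 2 := by rw [e3]
    show macaulay 1 (S 1 k) = S 2 (liftK 0 k)
    rw [h1, heval]
    omega
  | succ d ih =>
    intro k hc
    have hT : d + 1 ≤ ext k (d + 1) := ext_ge hc (d + 1) (by omega)
    have hr1 : 1 ≤ S (d + 1) (dropK (d + 1) k) := S_pos' (fracCond_drop (by omega) hc)
    have hrB : S (d + 1) (dropK (d + 1) k) ≤ (ext k (d + 1)).choose (d + 1) := B' d k hc
    have hsplit : S (d + 2) k = S (d + 1) (dropK (d + 1) k) + (ext k (d + 1)).choose (d + 2) :=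
      S_succ' (d + 1) k
    have hP : (ext k (d + 1) + 1).choose (d + 2)
        = (ext k (d + 1)).choose (d + 1) + (ext k (d + 1)).choose (d + 2) :=
      Nat.choose_succ_succ' _ _
    have hfin : S (d + 3) (liftK (d + 1) k)
        = S (d + 2) (dropK (d + 2) (liftK (d + 1) k))
          + (ext (liftK (d + 1) k) (d + 2)).choose (d + 3) := S_succ' (d + 2) (liftK (d + 1) k)
    have hll : ext (liftK (d + 1) k) (d + 2) = ext k (d + 1) + 1 := liftK_last' d k
    have hld : liftK d (dropK (d + 1) k) = dropK (d + 2) (liftK (d + 1) k) := liftK_drop d k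
    show macaulay (d + 2) (S (d + 2) k) = S (d + 3) (liftK (d + 1) k)
    rw [hsplit]
    rcases Nat.lt_or_ge (S (d + 1) (dropK (d + 1) k)) ((ext k (d + 1)).choose (d + 1))
      with hlt | hge
    · have hm1 : (ext k (d + 1)).choose (d + 2)
          ≤ S (d + 1) (dropK (d + 1) k) + (ext k (d + 1)).choose (d + 2) := by omega
      have hm2 : S (d + 1) (dropK (d + 1) k) + (ext k (d + 1)).choose (d + 2)
          < (ext k (d + 1) + 1).choose (d + 2) := by omega
      have heval : macaulay (d + 2) (S (d + 1) (dropK (d + 1) k) + (ext k (d + 1)).choose (d + 2))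
          = (ext k (d + 1) + 1).choose (d + 3)
            + macaulay (d + 1)
              (S (d + 1) (dropK (d + 1) k) + (ext k (d + 1)).choose (d + 2)
                - (ext k (d + 1)).choose (d + 2)) :=
        macaulay_eval (d + 1) _ (ext k (d + 1)) (by omega) (by omega) hm1 hm2
      rw [heval, Nat.add_sub_cancel]
      have hih : macaulay (d + 1) (S (d + 1) (dropK (d + 1) k))
          = S (d + 2) (liftK d (dropK (d + 1) k)) :=
        ih (dropK (d + 1) k) (fracCond_drop (by omega) hc)
      rw [hih, hld, hfin, hll]
      omega
    · have hre : S (d + 1) (dropK (d + 1) k) = (ext k (d + 1)).choose (d + 1) :=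
        le_antisymm hrB hge
      have hm1 : (ext k (d + 1) + 1).choose (d + 2)
          ≤ S (d + 1) (dropK (d + 1) k) + (ext k (d + 1)).choose (d + 2) := by omega
      have hQ : (ext k (d + 1) + 1 + 1).choose (d + 2)
          = (ext k (d + 1) + 1).choose (d + 1) + (ext k (d + 1) + 1).choose (d + 2) :=
        Nat.choose_succ_succ' _ _
      have hpos : 0 < (ext k (d + 1) + 1).choose (d + 1) := Nat.choose_pos (by omega)
      have hm2 : S (d + 1) (dropK (d + 1) k) + (ext k (d + 1)).choose (d + 2)
          < (ext k (d + 1) + 1 + 1).choose (d + 2) := by omega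
      have heval : macaulay (d + 2) (S (d + 1) (dropK (d + 1) k) + (ext k (d + 1)).choose (d + 2))
          = (ext k (d + 1) + 1 + 1).choose (d + 3)
            + macaulay (d + 1)
              (S (d + 1) (dropK (d + 1) k) + (ext k (d + 1)).choose (d + 2)
                - (ext k (d + 1) + 1).choose (d + 2)) :=
        macaulay_eval (d + 1) _ (ext k (d + 1) + 1) (by omega) (by omega) hm1 hm2
      have hzero : S (d + 1) (dropK (d + 1) k) + (ext k (d + 1)).choose (d + 2)
          - (ext k (d + 1) + 1).choose (d + 2) = 0 := by omega
      rw [heval, hzero, macaulay_zero, Nat.add_zero]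
      have hE : S (d + 2) (liftK d (dropK (d + 1) k)) = (ext k (d + 1) + 1).choose (d + 2) :=
        E d (dropK (d + 1) k) (fracCond_drop (by omega) hc) (ext k (d + 1)) hre
      rw [hfin, hll, ← hld, hE]
      have hR : (ext k (d + 1) + 1 + 1).choose (d + 3)
          = (ext k (d + 1) + 1).choose (d + 2) + (ext k (d + 1) + 1).choose (d + 3) :=
        Nat.choose_succ_succ' _ _
      omega

lemma U_top : ∀ d (k k' : Fin (d + 1) → ℕ), FracCond (d + 1) k → FracCond (d + 1) k' →
    S (d + 1) k = S (d + 1) k' → ext k d ≤ ext k' d := by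
  intro d k k' hc hc' hS
  by_contra hlt
  push_neg at hlt
  cases d with
  | zero =>
    have h1 : S (0 + 1) k = ext k 0 := S_one' k
    have h2 : S (0 + 1) k' = ext k' 0 := S_one' k'
    omega
  | succ e =>
    have h1 : S (e + 2) k' ≤ (ext k' (e + 1) + 1).choose (e + 2) :=
      B (e + 1) k' hc' (ext k' (e + 1)) le_rfl
    have h2 : (ext k' (e + 1) + 1).choose (e + 2) ≤ (ext k (e + 1)).choose (e + 2) :=
      Nat.choose_le_choose _ (by omega)
    have h3 : S (e + 2) k = S (e + 1) (dropK (e + 1) k) + (ext k (e + 1)).choose (e + 2) :=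
      S_succ' (e + 1) k
    have h4 : 1 ≤ S (e + 1) (dropK (e + 1) k) := S_pos' (fracCond_drop (by omega) hc)
    have hS' : S (e + 2) k = S (e + 2) k' := hS
    omega

lemma U : ∀ d (k k' : Fin (d + 1) → ℕ), FracCond (d + 1) k → FracCond (d + 1) k' →
    S (d + 1) k = S (d + 1) k' → k = k' := by
  intro d
  induction d with
  | zero =>
    intro k k' hc hc' hS
    have h1 : S 1 k = ext k 0 := S_one' k
    have h2 : S 1 k' = ext k' 0 := S_one' k'
    have hS' : S 1 k = S 1 k' := hS
    funext j
    rcases j with ⟨j, hj⟩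
    have hj0 : j = 0 := by omega
    subst hj0
    have e1 : ext k 0 = k ⟨0, hj⟩ := ext_eq k 0 hj
    have e2 : ext k' 0 = k' ⟨0, hj⟩ := ext_eq k' 0 hj
    omega
  | succ d ih =>
    intro k k' hc hc' hS
    have htop : ext k (d + 1) = ext k' (d + 1) :=
      le_antisymm (U_top (d + 1) k k' hc hc' hS) (U_top (d + 1) k' k hc' hc hS.symm)
    have h3 : S (d + 2) k = S (d + 1) (dropK (d + 1) k) + (ext k (d + 1)).choose (d + 2) :=
      S_succ' (d + 1) k
    have h4 : S (d + 2) k' = S (d + 1) (dropK (d + 1) k') + (ext k' (d + 1)).choose (d + 2) :=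
      S_succ' (d + 1) k'
    have hS' : S (d + 2) k = S (d + 2) k' := hS
    have h5 : S (d + 1) (dropK (d + 1) k) = S (d + 1) (dropK (d + 1) k') := by
      rw [htop] at h3
      omega
    have hdrop : dropK (d + 1) k = dropK (d + 1) k' :=
      ih _ _ (fracCond_drop (by omega) hc) (fracCond_drop (by omega) hc') h5
    funext j
    rcases j with ⟨j, hj⟩
    rcases Nat.lt_or_ge j (d + 1) with hlt | hge
    · exact congrFun hdrop ⟨j, hlt⟩
    · have hj1 : j = d + 1 := by omega
      subst hj1
      have e1 : ext k (d + 1) = k ⟨d + 1, hj⟩ := ext_eq _ _ hj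
      have e2 : ext k' (d + 1) = k' ⟨d + 1, hj⟩ := ext_eq _ _ hj
      rw [← e1, ← e2]
      exact htop

lemma fracCoeff_mk (d : ℕ) (k : Fin d → ℕ) (j : ℕ) (h : j < d) :
    fracCoeff d k ⟨j, h⟩ = if j = 0 then k ⟨j, h⟩ else k ⟨j, h⟩ + 1 - j := rfl

end FracProof

/-- Lemma 2.12: if `[a]^{(d)} = (c_d, c_{d-1}, …, c_2, c_1)` are the `d`-fractal
coefficients of `a`, then the `(d+1)`-fractal coefficients of `a^{⟨d⟩}` are obtained by
repeating the last entry: `[a^{⟨d⟩}]^{(d+1)} = (c_d, c_{d-1}, …, c_2, c_1, c_1)`.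
In the `Fin` encoding: the new coefficient at index `0` is `c_1` and the one at index
`i+1` is the old coefficient at index `i`. -/
theorem fracCoeff_of_macaulay (d a : ℕ) (hd : 0 < d) (ha : 0 < a)
    (k : Fin d → ℕ) (hk : IsFracDecomp d a k)
    (l : Fin (d + 1) → ℕ) (hl : IsFracDecomp (d + 1) (macaulay d a) l) :
    fracCoeff (d + 1) l 0 = fracCoeff d k ⟨0, hd⟩ ∧
    ∀ i : Fin d, fracCoeff (d + 1) l i.succ = fracCoeff d k i := by
  obtain ⟨d', rfl⟩ : ∃ d', d = d' + 1 := ⟨d - 1, by omega⟩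
  obtain ⟨hck, hak⟩ := hk
  obtain ⟨hcl, hal⟩ := hl
  have hkS : a = FracProof.S (d' + 1) k := hak.trans (FracProof.S_spec (d' + 1) k).symm
  have hlS : macaulay (d' + 1) a = FracProof.S (d' + 2) l :=
    hal.trans (FracProof.S_spec (d' + 2) l).symm
  have hSeq : FracProof.S (d' + 2) l = FracProof.S (d' + 2) (FracProof.liftK d' k) := by
    rw [← hlS, hkS, FracProof.macaulay_S d' k hck]
  have hleq : l = FracProof.liftK d' k :=
    FracProof.U (d' + 1) l (FracProof.liftK d' k) hcl (FracProof.fracCond_lift hck) hSeq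
  subst hleq
  constructor
  · have h0 : (0 : Fin (d' + 2)) = ⟨0, by omega⟩ := by
      apply Fin.ext
      simp
    rw [h0, FracProof.fracCoeff_mk, FracProof.fracCoeff_mk, if_pos rfl, if_pos rfl,
      FracProof.liftK_mk, if_pos rfl]
  · intro i
    rcases i with ⟨j, hj⟩
    show fracCoeff (d' + 2) (FracProof.liftK d' k) ⟨j + 1, by omega⟩
      = fracCoeff (d' + 1) k ⟨j, hj⟩
    rw [FracProof.fracCoeff_mk, FracProof.fracCoeff_mk, if_neg (by omega : j + 1 ≠ 0),
      FracProof.liftK_mk, if_neg (by omega : j + 1 ≠ 0)]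
    by_cases h0 : j = 0
    · subst h0
      rw [if_pos (show (0 : ℕ) + 1 = 1 from rfl), if_pos (rfl : (0 : ℕ) = 0)]
      rw [FracProof.kcongr (hi := by omega) (hj := hj) k (show 0 + 1 - 1 = 0 by omega)]
      omega
    · rw [if_neg h0, if_neg (by omega : j + 1 ≠ 1)]
      rw [FracProof.kcongr (hi := by omega) (hj := hj) k (show j + 1 - 1 = j by omega)]
      omega
end

section
/- The infinite sequence [ℕ] := [1] ⌢ [2] ⌢ [3] ⌢ ... ⌢ [n] ⌢ ... is a fractal sequence: the subsequence obtained from [ℕ] by deleting the first occurrence of each positive integer is equal to [ℕ] itself. -/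
private def t (n : ℕ) : ℕ := n * (n + 1) / 2

private lemma t_succ (n : ℕ) : t (n + 1) = t n + (n + 1) := by
  have h : (n + 1) * (n + 2) = n * (n + 1) + (n + 1) * 2 := by ring
  show (n + 1) * (n + 2) / 2 = n * (n + 1) / 2 + (n + 1)
  rw [h, Nat.add_mul_div_right _ _ (by norm_num)]

private lemma t_mono : Monotone t := by
  apply monotone_nat_of_le_succ
  intro n; rw [t_succ]; omega

private lemma exists_lt_t (i : ℕ) : ∃ m, i < t m := by
  refine ⟨i + 1, ?_⟩
  induction i with
  | zero => simp [t_succ]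
  | succ k ih => rw [t_succ]; omega

private def blk (i : ℕ) : ℕ := Nat.find (exists_lt_t i)

private lemma blk_eq {i m : ℕ} (h1 : t m ≤ i) (h2 : i < t (m + 1)) : blk i = m + 1 := by
  rw [blk, Nat.find_eq_iff]
  refine ⟨h2, fun k hk hlt => ?_⟩
  have : t k ≤ t m := t_mono (by omega)
  omega

private lemma decomp (i : ℕ) : ∃ m c, c ≤ m ∧ i = t m + c ∧ blk i = m + 1 := by
  have h1 : i < t (blk i) := Nat.find_spec (exists_lt_t i)
  have hpos : 1 ≤ blk i := by
    by_contra h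
    have : blk i = 0 := by omega
    rw [this] at h1
    simp [t] at h1
  obtain ⟨m, hm⟩ : ∃ m, blk i = m + 1 := ⟨blk i - 1, by omega⟩
  have h2 : t m ≤ i := by
    by_contra h
    have := Nat.find_min (exists_lt_t i) (show m < blk i by omega)
    omega
  have h3 : i < t m + (m + 1) := by rw [← t_succ, ← hm]; exact h1
  exact ⟨m, i - t m, by omega, by omega, by omega⟩

/-- The infinite sequence `[ℕ] = [1] ⌢ [2] ⌢ [3] ⌢ …` (where `[n] = (1,2,…,n)`) is a
fractal sequence: deleting the first occurrence of each positive integer — i.e. keeping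
exactly those entries `f i` for which there exists `j < i` with `f j = f i` — yields
the sequence itself.

Here `f : ℕ → ℕ` (0-indexed) is characterized as `[ℕ]` by the hypothesis that the
block `[n]` occupies positions `(n-1)n/2, …, (n-1)n/2 + n - 1`, and the subsequence of
kept entries is expressed via the strictly monotone enumeration `g` of the set of kept
indices. -/
theorem natFractal_is_fractal (f : ℕ → ℕ)
    (hf : ∀ n : ℕ, 1 ≤ n → ∀ c : ℕ, c < n → f ((n - 1) * n / 2 + c) = c + 1) :
    ∃ g : ℕ → ℕ, StrictMono g ∧
      (∀ i : ℕ, (∃ j < i, f j = f i) ↔ i ∈ Set.range g) ∧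
      ∀ i : ℕ, f (g i) = f i := by
  have hval : ∀ m c : ℕ, c ≤ m → f (t m + c) = c + 1 := by
    intro m c h
    have := hf (m + 1) (by omega) c (by omega)
    simpa [t] using this
  refine ⟨fun i => i + blk i, ?_, ?_, ?_⟩
  · apply strictMono_nat_of_lt_succ
    intro i
    have hmono : blk i ≤ blk (i + 1) := by
      apply Nat.find_mono
      intro m hm
      omega
    omega
  · intro i
    constructor
    · rintro ⟨j, hj, hfj⟩
      obtain ⟨m, c, hcm, hi, hblk⟩ := decomp i
      obtain ⟨n, d, hdn, hjeq, hblkj⟩ := decomp j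
      have hfi : f i = c + 1 := by rw [hi]; exact hval m c hcm
      have hfjv : f j = d + 1 := by rw [hjeq]; exact hval n d hdn
      have hdc : d = c := by omega
      have hcltm : c < m := by
        by_contra h
        have hc : c = m := by omega
        have hnm : m ≤ n := by omega
        have : t m ≤ t n := t_mono hnm
        omega
      obtain ⟨k, rfl⟩ : ∃ k, m = k + 1 := ⟨m - 1, by omega⟩
      refine ⟨t k + c, ?_⟩
      have hb : blk (t k + c) = k + 1 := by
        apply blk_eq (by omega)
        rw [t_succ]; omega
      simp only [hb]
      rw [hi, t_succ]; omega
    · rintro ⟨i', rfl⟩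
      obtain ⟨m, c, hcm, hi', hblk⟩ := decomp i'
      have heq : i' + blk i' = t (m + 1) + c := by rw [hblk, t_succ]; omega
      refine ⟨i', ?_, ?_⟩
      · show i' < i' + blk i'; omega
      · show f i' = f (i' + blk i')
        rw [heq, hi', hval m c hcm, hval (m + 1) c (by omega)]
  · intro i
    obtain ⟨m, c, hcm, hi, hblk⟩ := decomp i
    have heq : i + blk i = t (m + 1) + c := by rw [hblk, t_succ]; omega
    show f (i + blk i) = f i
    rw [heq, hi, hval m c hcm, hval (m + 1) c (by omega)]
end
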